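/- (Proposition 3.) An embedded subset (A,P) ∈ ℰ^N is a modular element of the geometric lattice ℰ^N (i.e., r(A,P) + r(B,Q) = r((A,P) ∨ (B,Q)) + r((A,P) ∧ (B,Q)) for all (B,Q) ∈ ℰ^N) if and only if P is a modular partition (P = P_⊥ or P = P^C_⊥ for some C ⊆ N with |C| > 1) and either A = ∅, or else P ≠ P_⊥ and A is the non-singleton block of P. Consequently ℰ^N has exactly 2^{n+1} − (n+1) modular elements. -/

import Mathlib

open scoped BigOperators

/-- `modp n A` is the modular partition `P^A_⊥` of `Fin n` whose unique (possibly)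
non-singleton block is `A`, all other blocks being singletons. -/
def modp (n : ℕ) (A : Set (Fin n)) : Setoid (Fin n) where
  r x y := x = y ∨ (x ∈ A ∧ y ∈ A)
  iseqv := by
    refine ⟨fun _ => Or.inl rfl, ?_, ?_⟩
    · rintro x y (rfl | ⟨hx, hy⟩)
      · exact Or.inl rfl
      · exact Or.inr ⟨hy, hx⟩
    · rintro x y z (rfl | ⟨hx, hy⟩) h
      · exact h
      · rcases h with rfl | ⟨hy', hz⟩
        · exact Or.inr ⟨hx, hy⟩
        · exact Or.inr ⟨hx, hz⟩

/-- The product `X^N = 2^N × 𝒫^N` of the subset lattice and the partition lattice,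
ordered componentwise. -/
abbrev XN (n : ℕ) := Set (Fin n) × Setoid (Fin n)

/-- The closure operator `cl` on `X^N`:  `cl(∅,P) = (∅,P)` and, for `A ≠ ∅`,
`cl(A,P) = (Ā, P ⊔ P^A_⊥)` where `Ā` is the block of `P ⊔ P^A_⊥` containing `A`. -/
def EmbClosure (n : ℕ) (x : XN n) : XN n :=
  ({y | ∃ a ∈ x.1, (x.2 ⊔ modp n x.1) y a}, x.2 ⊔ modp n x.1)

/-- An embedded subset is a pair that coincides with its closure. -/
def IsEmbedded (n : ℕ) (x : XN n) : Prop := EmbClosure n x = x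

/-- The lattice `ℰ^N` of embedded subsets, with the induced order. -/
abbrev Emb (n : ℕ) := {x : XN n // IsEmbedded n x}

lemma modp_le_of_subsingleton {n : ℕ} {A : Set (Fin n)} (h : A.Subsingleton)
    (Q : Setoid (Fin n)) : modp n A ≤ Q := by
  rw [Setoid.le_def]
  intro x y hxy
  rcases hxy with rfl | ⟨hx, hy⟩
  · exact Q.refl' x
  · obtain rfl := h hx hy
    exact Q.refl' x

lemma modp_eq_bot_of_subsingleton {n : ℕ} {A : Set (Fin n)} (h : A.Subsingleton) :
    modp n A = ⊥ :=
  le_antisymm (modp_le_of_subsingleton h ⊥) bot_le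

lemma embedded_empty (n : ℕ) (Q : Setoid (Fin n)) : IsEmbedded n (∅, Q) := by
  unfold IsEmbedded EmbClosure
  refine Prod.ext ?_ ?_
  · simp
  · simpa using sup_eq_left.mpr (modp_le_of_subsingleton Set.subsingleton_empty Q)

lemma embedded_univ_top (n : ℕ) : IsEmbedded n (Set.univ, ⊤) := by
  unfold IsEmbedded EmbClosure
  refine Prod.ext ?_ ?_
  · ext y
    simp only [Set.mem_setOf_eq, Set.mem_univ, iff_true]
    exact ⟨y, trivial, Setoid.refl' _ y⟩
  · exact sup_eq_left.mpr le_top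

lemma embedded_singleton (n : ℕ) (i : Fin n) : IsEmbedded n ({i}, ⊥) := by
  have hb : modp n ({i} : Set (Fin n)) = ⊥ :=
    modp_eq_bot_of_subsingleton Set.subsingleton_singleton
  unfold IsEmbedded EmbClosure
  refine Prod.ext ?_ ?_
  · ext y
    simp only [Set.mem_setOf_eq, hb, sup_idem, Set.mem_singleton_iff]
    constructor
    · rintro ⟨a, ha, hrel⟩
      subst ha
      change (⊥ ⊔ modp n {a}) y a at hrel
      rw [hb, sup_idem] at hrel
      simpa [Setoid.bot_def] using hrel
    · rintro rfl
      exact ⟨y, rfl, Setoid.refl' _ y⟩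
  · simp [hb]

/-- The bottom element `(∅, P_⊥)` of `ℰ^N`. -/
def botE (n : ℕ) : Emb n := ⟨(∅, ⊥), embedded_empty n ⊥⟩

/-- The top element `(N, P^⊤)` of `ℰ^N`. -/
def topE (n : ℕ) : Emb n := ⟨(Set.univ, ⊤), embedded_univ_top n⟩

/-- The atom `({i}, P_⊥)` of `ℰ^N`. -/
def atomS (n : ℕ) (i : Fin n) : Emb n := ⟨({i}, ⊥), embedded_singleton n i⟩

/-- The atom `(∅, [ij])` of `ℰ^N`, where `[ij]` is the atom of the partition lattice
whose unique non-singleton block is the pair `{i, j}`. -/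
def atomP (n : ℕ) (i j : Fin n) : Emb n := ⟨(∅, modp n {i, j}), embedded_empty n _⟩

/-- A pair is an atom candidate: of the form `({i},P_⊥)` or `(∅,[ij])` with `i ≠ j`. -/
def IsAtomPair (n : ℕ) (a : XN n) : Prop :=
  (∃ i : Fin n, a = ({i}, ⊥)) ∨ ∃ i j : Fin n, i ≠ j ∧ a = (∅, modp n {i, j})

/-- The number of blocks `|P|` of a partition. -/
noncomputable def numBlocks {α : Type*} (P : Setoid α) : ℕ := P.classes.ncard

/-- The rank function `r(A,P) = (n − |P|) + min{|A|,1}` of `ℰ^N`. -/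
noncomputable def erank (n : ℕ) (x : XN n) : ℕ := (n - numBlocks x.2) + min x.1.ncard 1

/-- The partition `Q^S` of `S` induced by a partition `Q` of `N`. -/
def indPart {n : ℕ} (S : Set (Fin n)) (Q : Setoid (Fin n)) : Setoid S :=
  Setoid.comap Subtype.val Q

/-- `mu` is the Möbius function of the (finite) poset `α`. -/
def IsMobius {α : Type*} [PartialOrder α] (mu : α → α → ℤ) : Prop :=
  (∀ x, mu x x = 1) ∧
  (∀ x y, ¬x ≤ y → mu x y = 0) ∧
  (∀ x y, x < y → mu x y = -∑ᶠ z ∈ Set.Ico x y, mu x z)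

def IsModularElem (n : ℕ) (x : Emb n) : Prop :=
  ∀ y : Emb n, erank n x.val + erank n y.val =
    erank n (EmbClosure n (x.val ⊔ y.val)) + erank n (x.val ⊓ y.val)


/-!
With `r(A,P) = (n - |P|) + [A ≠ ∅]`, every modularity identity is a count of blocks. Merging
all blocks of `Q` that meet a nonempty `C` (this is `Q ⊔ P^C_⊥`) leaves `|Q| + 1 - k` blocks,
`k` being the number of blocks of `Q` meeting `C`, and `P^C_⊥ ⊓ Q` has `n - |C| + k` blocks;
the `k` cancels, which makes `(∅, P^C_⊥)` and `(C, P^C_⊥)` modular. Conversely, a partition with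
two non-trivial blocks `a ~ b`, `u ~ v` violates the identity against `(∅, P^{au}_⊥ ∨ P^{bv}_⊥)`,
and `({i}, P^C_⊥)` with `i ∉ C ∋ c₁, c₂` violates it against `({c₂}, P^{ic₁}_⊥)`. The modular
elements are thus `(C, P^C_⊥)` for `C ≠ ∅` and `(∅, P^C_⊥)` for `|C| ≠ 1`, all distinct.
-/

lemma min_ncard_one_of_nonempty {α : Type*} [Finite α] {s : Set α} (h : s.Nonempty) :
    min s.ncard 1 = 1 :=
  min_eq_right ((Set.ncard_pos (Set.toFinite s)).2 h)

namespace Setoid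

variable {α : Type*} (Q : Setoid α)

def block (a : α) : Set α := {x | Q x a}

def saturation (C : Set α) : Set α := {x | ∃ c ∈ C, Q x c}

variable {Q}

@[simp] lemma mem_block {x a : α} : x ∈ Q.block a ↔ Q x a := Iff.rfl

lemma mem_block_self (a : α) : a ∈ Q.block a := Q.refl' a

lemma block_eq_block_iff {a b : α} : Q.block a = Q.block b ↔ Q a b :=
  ⟨fun h => (h ▸ mem_block_self a : a ∈ Q.block b),
    fun h => Set.ext fun _ => ⟨fun hx => Q.trans' hx h, fun hx => Q.trans' hx (Q.symm' h)⟩⟩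

variable (Q) in
lemma eq_of_rel_of_mem_pair {s t x y : α} (hst : ¬Q s t) (hx : x ∈ ({s, t} : Set α))
    (hy : y ∈ ({s, t} : Set α)) (hxy : Q x y) : x = y := by
  rcases hx with rfl | rfl <;> rcases hy with rfl | rfl
  exacts [rfl, absurd hxy hst, absurd (Q.symm' hxy) hst, rfl]

lemma classes_eq_range_block : Q.classes = Set.range Q.block := by
  ext D
  exact ⟨fun ⟨a, hD⟩ => ⟨a, hD.symm⟩, fun ⟨a, hD⟩ => ⟨a, hD.symm⟩⟩

lemma eq_block_of_mem_classes {D : Set α} (hD : D ∈ Q.classes) {a : α} (ha : a ∈ D) :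
    D = Q.block a := by
  obtain ⟨y, rfl⟩ := hD
  exact block_eq_block_iff.2 (Q.symm' ha)

lemma numBlocks_bot : numBlocks (⊥ : Setoid α) = Nat.card α := by
  rw [numBlocks, classes_eq_range_block]
  exact Set.ncard_range_of_injective Set.singleton_injective

lemma subset_saturation (C : Set α) : C ⊆ Q.saturation C := fun c hc => ⟨c, hc, Q.refl' c⟩

lemma mem_saturation_of_rel {C : Set α} {x y : α} (h : Q x y) (hy : y ∈ Q.saturation C) :
    x ∈ Q.saturation C :=
  let ⟨c, hc, hyc⟩ := hy
  ⟨c, hc, Q.trans' h hyc⟩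

lemma block_mem_image_iff {C : Set α} {a : α} : Q.block a ∈ Q.block '' C ↔ a ∈ Q.saturation C :=
  ⟨fun ⟨c, hc, h⟩ => ⟨c, hc, block_eq_block_iff.1 h.symm⟩,
    fun ⟨c, hc, h⟩ => ⟨c, hc, (block_eq_block_iff.2 h).symm⟩⟩

variable (Q)

def mergeBlocks (C : Set α) : Setoid α where
  r x y := Q x y ∨ (x ∈ Q.saturation C ∧ y ∈ Q.saturation C)
  iseqv := by
    refine ⟨fun x => Or.inl (Q.refl' x), ?_, ?_⟩
    · rintro x y (h | ⟨hx, hy⟩)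
      · exact Or.inl (Q.symm' h)
      · exact Or.inr ⟨hy, hx⟩
    · rintro x y z (h | ⟨hx, hy⟩) (h' | ⟨hy', hz⟩)
      · exact Or.inl (Q.trans' h h')
      · exact Or.inr ⟨mem_saturation_of_rel h hy', hz⟩
      · exact Or.inr ⟨hx, mem_saturation_of_rel (Q.symm' h') hy⟩
      · exact Or.inr ⟨hx, hz⟩

variable {Q}

lemma mergeBlocks_rel {C : Set α} {x y : α} :
    Q.mergeBlocks C x y ↔ Q x y ∨ (x ∈ Q.saturation C ∧ y ∈ Q.saturation C) := Iff.rfl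

lemma block_mergeBlocks_of_mem {C : Set α} {a : α} (ha : a ∈ Q.saturation C) :
    (Q.mergeBlocks C).block a = Q.saturation C := by
  ext x
  refine ⟨?_, fun hx => Or.inr ⟨hx, ha⟩⟩
  rintro (h | ⟨hx, -⟩)
  exacts [mem_saturation_of_rel h ha, hx]

lemma block_mergeBlocks_of_notMem {C : Set α} {a : α} (ha : a ∉ Q.saturation C) :
    (Q.mergeBlocks C).block a = Q.block a := by
  ext x
  refine ⟨?_, Or.inl⟩
  rintro (h | ⟨-, ha'⟩)
  exacts [h, absurd ha' ha]

lemma classes_mergeBlocks {C : Set α} (hC : C.Nonempty) :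
    (Q.mergeBlocks C).classes = insert (Q.saturation C) (Q.classes \ Q.block '' C) := by
  ext D
  simp only [classes_eq_range_block, Set.mem_insert_iff, Set.mem_sdiff, Set.mem_range]
  constructor
  · rintro ⟨a, rfl⟩
    by_cases ha : a ∈ Q.saturation C
    · exact Or.inl (block_mergeBlocks_of_mem ha)
    · rw [block_mergeBlocks_of_notMem ha]
      exact Or.inr ⟨⟨a, rfl⟩, block_mem_image_iff.not.2 ha⟩
  · rintro (rfl | ⟨⟨a, rfl⟩, ha⟩)
    · obtain ⟨c, hc⟩ := hC
      exact ⟨c, block_mergeBlocks_of_mem (subset_saturation C hc)⟩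
    · exact ⟨a, block_mergeBlocks_of_notMem (block_mem_image_iff.not.1 ha)⟩

section Finite

variable [Finite α]

lemma numBlocks_mergeBlocks_add {C : Set α} (hC : C.Nonempty) :
    numBlocks (Q.mergeBlocks C) + (Q.block '' C).ncard = numBlocks Q + 1 := by
  have himage : Q.block '' C ⊆ Q.classes := by
    rintro _ ⟨c, -, rfl⟩
    exact Q.mem_classes c
  have hnotMem : Q.saturation C ∉ Q.classes \ Q.block '' C := by
    rintro ⟨hmem, hnot⟩
    obtain ⟨c, hc⟩ := hC
    exact hnot ⟨c, hc, (eq_block_of_mem_classes hmem (subset_saturation C hc)).symm⟩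
  rw [numBlocks, numBlocks, classes_mergeBlocks hC, Set.ncard_insert_of_notMem hnotMem,
    Set.ncard_sdiff himage]
  have := Set.ncard_le_ncard himage
  omega

lemma ncard_block_image_union_add (C : Set α) {B : Set α} (hB : ∀ b ∈ B, Q.block b = B) :
    (Q.block '' (C ∪ B)).ncard + min (C ∩ B).ncard 1 = (Q.block '' C).ncard + min B.ncard 1 := by
  rcases B.eq_empty_or_nonempty with rfl | ⟨b, hb⟩
  · simp
  have himage : Q.block '' B = {B} := by
    refine Set.Subset.antisymm ?_ (Set.singleton_subset_iff.2 ⟨b, hb, hB b hb⟩)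
    rintro _ ⟨b', hb', rfl⟩
    exact hB b' hb'
  rw [Set.image_union, himage, Set.union_singleton, min_ncard_one_of_nonempty ⟨b, hb⟩]
  by_cases hCB : (C ∩ B).Nonempty
  · rw [Set.insert_eq_of_mem (show B ∈ Q.block '' C from ?_), min_ncard_one_of_nonempty hCB]
    obtain ⟨c, hcC, hcB⟩ := hCB
    exact ⟨c, hcC, hB c hcB⟩
  · have hnotMem : B ∉ Q.block '' C := by
      rintro ⟨c, hc, hcB⟩
      rw [← hcB] at hCB
      exact hCB ⟨c, hc, mem_block_self c⟩
    rw [Set.ncard_insert_of_notMem hnotMem, Set.not_nonempty_iff_eq_empty.1 hCB, Set.ncard_empty]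
    rfl

variable (Q) in
lemma numBlocks_le_card : numBlocks Q ≤ Nat.card α := by
  rw [numBlocks, classes_eq_range_block, ← Set.image_univ, ← Set.ncard_univ α]
  exact Set.ncard_image_le

end Finite

end Setoid

section Modp

variable {n : ℕ}

open Setoid

lemma modp_rel {C : Set (Fin n)} {x y : Fin n} : modp n C x y ↔ x = y ∨ x ∈ C ∧ y ∈ C :=
  Iff.rfl

lemma modp_mono {C D : Set (Fin n)} (h : C ⊆ D) : modp n C ≤ modp n D :=
  Setoid.le_def.2 fun hxy => hxy.imp_right fun ⟨hx, hy⟩ => ⟨h hx, h hy⟩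

lemma block_modp_of_mem {C : Set (Fin n)} {c : Fin n} (hc : c ∈ C) : (modp n C).block c = C := by
  ext x
  refine ⟨?_, fun hx => Or.inr ⟨hx, hc⟩⟩
  rintro (rfl | ⟨hx, -⟩)
  exacts [hc, hx]

lemma block_modp_of_notMem {C : Set (Fin n)} {c : Fin n} (hc : c ∉ C) :
    (modp n C).block c = {c} := by
  ext x
  refine ⟨?_, fun hx => Or.inl hx⟩
  rintro (rfl | ⟨-, hc'⟩)
  exacts [rfl, absurd hc' hc]

lemma sup_modp_eq_mergeBlocks (Q : Setoid (Fin n)) (C : Set (Fin n)) :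
    Q ⊔ modp n C = Q.mergeBlocks C := by
  refine le_antisymm (sup_le (Setoid.le_def.2 Or.inl) (Setoid.le_def.2 ?_)) (Setoid.le_def.2 ?_)
  · rintro x y (rfl | ⟨hx, hy⟩)
    exacts [(Q.mergeBlocks C).refl' x, Or.inr ⟨subset_saturation C hx, subset_saturation C hy⟩]
  · set R := Q ⊔ modp n C
    have hQ : ∀ {x y}, Q x y → R x y := Setoid.le_def.1 le_sup_left
    have hC : ∀ {x y}, modp n C x y → R x y := Setoid.le_def.1 le_sup_right
    rintro x y (h | ⟨⟨c, hc, hxc⟩, ⟨d, hd, hyd⟩⟩)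
    · exact hQ h
    · exact R.trans' (R.trans' (hQ hxc) (hC (Or.inr ⟨hc, hd⟩))) (R.symm' (hQ hyd))

lemma saturation_modp_of_disjoint {C D : Set (Fin n)} (h : Disjoint C D) :
    (modp n C).saturation D = D := by
  refine Set.Subset.antisymm ?_ (subset_saturation D)
  rintro x ⟨d, hd, rfl | ⟨-, hdC⟩⟩
  exacts [hd, absurd hd (Set.disjoint_left.1 h hdC)]

lemma modp_sup_modp {C D : Set (Fin n)} (h : (C ∩ D).Nonempty) :
    modp n C ⊔ modp n D = modp n (C ∪ D) := by
  have hsat : (modp n C).saturation D = C ∪ D := by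
    refine Set.Subset.antisymm ?_ ?_
    · rintro x ⟨d, hd, rfl | ⟨hx, -⟩⟩
      exacts [Or.inr hd, Or.inl hx]
    · obtain ⟨e, heC, heD⟩ := h
      rintro x (hx | hx)
      exacts [⟨e, heD, Or.inr ⟨hx, heC⟩⟩, subset_saturation D hx]
  rw [sup_modp_eq_mergeBlocks]
  refine Setoid.ext fun x y => ?_
  simp only [mergeBlocks_rel, hsat, modp_rel, Set.mem_union]
  tauto

lemma modp_inf_modp (C D : Set (Fin n)) : modp n C ⊓ modp n D = modp n (C ∩ D) := by
  refine Setoid.ext fun x y => ?_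
  simp only [Setoid.inf_iff_and, modp_rel, Set.mem_inter_iff]
  tauto

lemma numBlocks_modp_add {C : Set (Fin n)} (hC : C.Nonempty) :
    numBlocks (modp n C) + C.ncard = n + 1 := by
  have h := (⊥ : Setoid (Fin n)).numBlocks_mergeBlocks_add hC
  have himage : ((⊥ : Setoid (Fin n)).block '' C).ncard = C.ncard :=
    Set.ncard_image_of_injective C Set.singleton_injective
  rwa [← sup_modp_eq_mergeBlocks, bot_sup_eq, numBlocks_bot, Nat.card_fin, himage] at h

lemma block_modp_inf_of_mem {C : Set (Fin n)} (Q : Setoid (Fin n)) {a : Fin n} (ha : a ∈ C) :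
    (modp n C ⊓ Q).block a = C ∩ Q.block a := by
  ext x
  simp only [mem_block, Set.mem_inter_iff]
  constructor
  · rintro ⟨rfl | ⟨hx, -⟩, hq⟩
    exacts [⟨ha, hq⟩, ⟨hx, hq⟩]
  · rintro ⟨hx, hq⟩
    exact ⟨Or.inr ⟨hx, ha⟩, hq⟩

lemma block_modp_inf_of_notMem {C : Set (Fin n)} (Q : Setoid (Fin n)) {a : Fin n} (ha : a ∉ C) :
    (modp n C ⊓ Q).block a = {a} :=
  Set.Subset.antisymm (fun _ hx => (modp_rel.1 (Setoid.inf_iff_and.1 hx).1).resolve_right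
    fun h => ha h.2) fun _ hx => hx ▸ (modp n C ⊓ Q).refl' _

lemma classes_modp_inf (C : Set (Fin n)) (Q : Setoid (Fin n)) :
    (modp n C ⊓ Q).classes = (C ∩ ·) '' (Q.block '' C) ∪ (fun a => {a}) '' Cᶜ := by
  rw [classes_eq_range_block]
  ext D
  constructor
  · rintro ⟨a, rfl⟩
    by_cases ha : a ∈ C
    · exact Or.inl ⟨Q.block a, ⟨a, ha, rfl⟩, (block_modp_inf_of_mem Q ha).symm⟩
    · exact Or.inr ⟨a, ha, (block_modp_inf_of_notMem Q ha).symm⟩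
  · rintro (⟨_, ⟨a, ha, rfl⟩, rfl⟩ | ⟨a, ha, rfl⟩)
    exacts [⟨a, block_modp_inf_of_mem Q ha⟩, ⟨a, block_modp_inf_of_notMem Q ha⟩]

lemma numBlocks_modp_inf_add (C : Set (Fin n)) (Q : Setoid (Fin n)) :
    numBlocks (modp n C ⊓ Q) + C.ncard = n + (Q.block '' C).ncard := by
  have hdisj : Disjoint ((C ∩ ·) '' (Q.block '' C)) ((fun a => {a}) '' Cᶜ) := by
    refine Set.disjoint_left.2 ?_
    rintro _ ⟨_, ⟨a, ha, rfl⟩, rfl⟩ ⟨b, hb, hba⟩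
    have hab : a ∈ ({b} : Set (Fin n)) := by
      rw [show ({b} : Set (Fin n)) = C ∩ Q.block a from hba]
      exact ⟨ha, mem_block_self a⟩
    rw [Set.mem_singleton_iff.1 hab] at ha
    exact hb ha
  have hinj : Set.InjOn (C ∩ ·) (Q.block '' C) := by
    rintro _ ⟨a, ha, rfl⟩ _ ⟨b, -, rfl⟩ hab
    have hab' : a ∈ C ∩ Q.block b := by
      rw [show C ∩ Q.block b = C ∩ Q.block a from hab.symm]
      exact ⟨ha, mem_block_self a⟩
    exact block_eq_block_iff.2 hab'.2
  rw [numBlocks, classes_modp_inf, Set.ncard_union_eq hdisj, hinj.ncard_image,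
    Set.ncard_image_of_injective _ Set.singleton_injective]
  have := Set.ncard_add_ncard_compl C
  rw [Nat.card_fin] at this
  omega

lemma numBlocks_modp_sup_modp_add {C D : Set (Fin n)} (hC : C.Nonempty) (hD : D.Nonempty)
    (h : Disjoint C D) : numBlocks (modp n C ⊔ modp n D) + C.ncard + D.ncard = n + 2 := by
  have hinj : Set.InjOn (modp n C).block D := fun x hx y hy hxy => by
    rwa [block_modp_of_notMem (Set.disjoint_right.1 h hx),
      block_modp_of_notMem (Set.disjoint_right.1 h hy), Set.singleton_eq_singleton_iff] at hxy
  have h1 := (modp n C).numBlocks_mergeBlocks_add hD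
  rw [hinj.ncard_image, ← sup_modp_eq_mergeBlocks] at h1
  have h2 := numBlocks_modp_add hC
  omega

lemma inf_modp_sup_modp_eq_bot {P : Setoid (Fin n)} {C D : Set (Fin n)} (h : Disjoint C D)
    (hC : ∀ x ∈ C, ∀ y ∈ C, P x y → x = y) (hD : ∀ x ∈ D, ∀ y ∈ D, P x y → x = y) :
    P ⊓ (modp n C ⊔ modp n D) = ⊥ := by
  refine eq_bot_iff.2 (Setoid.le_def.2 fun {x y} hxy => ?_)
  obtain ⟨hP, hCD⟩ := Setoid.inf_iff_and.1 hxy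
  rw [sup_modp_eq_mergeBlocks, mergeBlocks_rel, saturation_modp_of_disjoint h] at hCD
  rcases hCD with (rfl | ⟨hx, hy⟩) | ⟨hx, hy⟩
  exacts [rfl, hC x hx y hy hP, hD x hx y hy hP]

lemma numBlocks_le (P : Setoid (Fin n)) : numBlocks P ≤ n :=
  (numBlocks_le_card P).trans_eq (Nat.card_fin n)

end Modp

section Embedded

variable {n : ℕ}

open Setoid

lemma isEmbedded_iff {A : Set (Fin n)} {P : Setoid (Fin n)} :
    IsEmbedded n (A, P) ↔ modp n A ≤ P ∧ ∀ a ∈ A, P.block a = A := by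
  unfold IsEmbedded EmbClosure
  constructor
  · intro h
    have hle : modp n A ≤ P := sup_eq_left.1 (congrArg Prod.snd h)
    have hset : {y | ∃ a ∈ A, (P ⊔ modp n A) y a} = A := congrArg Prod.fst h
    rw [sup_eq_left.2 hle] at hset
    refine ⟨hle, fun a ha => Set.Subset.antisymm (fun x hx => ?_) fun x hx => ?_⟩
    · rw [← hset]
      exact ⟨a, ha, hx⟩
    · exact Setoid.le_def.1 hle (Or.inr ⟨hx, ha⟩)
  · rintro ⟨hle, hblock⟩
    rw [sup_eq_left.2 hle]
    refine Prod.ext (Set.Subset.antisymm ?_ fun x hx => ⟨x, hx, P.refl' x⟩) rfl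
    rintro x ⟨a, ha, hxa⟩
    rw [← hblock a ha]
    exact hxa

lemma isEmbedded_block (P : Setoid (Fin n)) (a : Fin n) : IsEmbedded n (P.block a, P) := by
  refine isEmbedded_iff.2 ⟨Setoid.le_def.2 ?_, fun b hb => block_eq_block_iff.2 hb⟩
  rintro x y (rfl | ⟨hx, hy⟩)
  exacts [P.refl' x, P.trans' hx (P.symm' hy)]

lemma isEmbedded_modp_self {C : Set (Fin n)} (hC : C.Nonempty) : IsEmbedded n (C, modp n C) := by
  obtain ⟨c, hc⟩ := hC
  simpa only [block_modp_of_mem hc] using isEmbedded_block (modp n C) c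

lemma erank_embClosure (x : XN n) :
    erank n (EmbClosure n x) = n - numBlocks (x.2 ⊔ modp n x.1) + min x.1.ncard 1 := by
  unfold erank EmbClosure
  congr 1
  rcases x.1.eq_empty_or_nonempty with h | ⟨a, ha⟩
  · simp [h]
  · have hcl : ({y | ∃ a ∈ x.1, (x.2 ⊔ modp n x.1) y a} : Set (Fin n)).Nonempty :=
      ⟨a, a, ha, Setoid.refl' _ a⟩
    rw [min_ncard_one_of_nonempty ⟨a, ha⟩, min_ncard_one_of_nonempty hcl]

lemma isModularElem_iff {A : Set (Fin n)} {P : Setoid (Fin n)} (h : IsEmbedded n (A, P)) :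
    IsModularElem n ⟨(A, P), h⟩ ↔ ∀ B Q, IsEmbedded n (B, Q) →
      n - numBlocks P + min A.ncard 1 + (n - numBlocks Q + min B.ncard 1) =
        n - numBlocks (P ⊔ Q ⊔ modp n (A ∪ B)) + min (A ∪ B).ncard 1 +
          (n - numBlocks (P ⊓ Q) + min (A ∩ B).ncard 1) := by
  unfold IsModularElem
  simp only [Subtype.forall, Prod.forall, erank_embClosure]
  rfl

end Embedded

section Modular

variable {n : ℕ}

open Setoid

lemma isModularElem_empty_modp (C : Set (Fin n)) (h : IsEmbedded n (∅, modp n C)) :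
    IsModularElem n ⟨(∅, modp n C), h⟩ := by
  refine (isModularElem_iff h).2 fun B Q hy => ?_
  rw [Set.empty_union, Set.empty_inter, Set.ncard_empty, sup_assoc,
    sup_eq_left.2 (isEmbedded_iff.1 hy).1, sup_comm (modp n C) Q]
  rcases C.eq_empty_or_nonempty with rfl | hC
  · rw [modp_eq_bot_of_subsingleton Set.subsingleton_empty, sup_bot_eq, bot_inf_eq, numBlocks_bot,
      Nat.card_fin]
    omega
  · rw [sup_modp_eq_mergeBlocks]
    have := numBlocks_modp_add hC
    have := Q.numBlocks_mergeBlocks_add hC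
    have := numBlocks_modp_inf_add C Q
    have := numBlocks_le (modp n C)
    have := numBlocks_le (Q.mergeBlocks C)
    have := numBlocks_le (modp n C ⊓ Q)
    have := numBlocks_le Q
    omega

lemma isModularElem_modp_self {C : Set (Fin n)} (hC : C.Nonempty) (h : IsEmbedded n (C, modp n C)) :
    IsModularElem n ⟨(C, modp n C), h⟩ := by
  refine (isModularElem_iff h).2 fun B Q hy => ?_
  have hCB : (C ∪ B).Nonempty := hC.mono Set.subset_union_left
  rw [sup_comm (modp n C) Q, sup_assoc, sup_eq_right.2 (modp_mono Set.subset_union_left),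
    sup_modp_eq_mergeBlocks, min_ncard_one_of_nonempty hC, min_ncard_one_of_nonempty hCB]
  have := Q.ncard_block_image_union_add C (isEmbedded_iff.1 hy).2
  have := numBlocks_modp_add hC
  have := Q.numBlocks_mergeBlocks_add hCB
  have := numBlocks_modp_inf_add C Q
  have := numBlocks_le (modp n C)
  have := numBlocks_le (Q.mergeBlocks (C ∪ B))
  have := numBlocks_le (modp n C ⊓ Q)
  have := numBlocks_le Q
  omega

lemma not_isModularElem_of_two_blocks {A : Set (Fin n)} {P : Setoid (Fin n)}
    (h : IsEmbedded n (A, P)) {a b u v : Fin n} (hab : P a b) (hne_ab : a ≠ b) (huv : P u v)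
    (hne_uv : u ≠ v) (hau : ¬P a u) : ¬IsModularElem n ⟨(A, P), h⟩ := by
  have hav : ¬P a v := fun h' => hau (P.trans' h' (P.symm' huv))
  have hbu : ¬P b u := fun h' => hau (P.trans' hab h')
  have hbv : ¬P b v := fun h' => hbu (P.trans' h' (P.symm' huv))
  have hdisj : Disjoint ({a, u} : Set (Fin n)) {b, v} := by
    simp only [Set.disjoint_insert_left, Set.disjoint_singleton_left, Set.mem_insert_iff,
      Set.mem_singleton_iff]
    refine ⟨?_, ?_⟩ <;> rintro (rfl | rfl)
    exacts [hne_ab rfl, hav (P.refl' _), hbu (P.refl' _), hne_uv rfl]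
  set Q := modp n {a, u} ⊔ modp n {b, v} with hQ
  have hmeet : P ⊓ Q = ⊥ := inf_modp_sup_modp_eq_bot hdisj
    (fun _ hx _ hy => P.eq_of_rel_of_mem_pair hau hx hy)
    (fun _ hx _ hy => P.eq_of_rel_of_mem_pair hbv hx hy)
  have hjoin : P ⊔ Q ⊔ modp n (A ∪ ∅) = P.mergeBlocks {a, u} := by
    have hsat : {b, v} ⊆ P.saturation {a, u} := by
      rintro x (rfl | rfl)
      exacts [⟨a, Or.inl rfl, P.symm' hab⟩, ⟨u, Or.inr rfl, P.symm' huv⟩]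
    have hbv_le : modp n {b, v} ≤ P ⊔ modp n {a, u} := by
      rw [sup_modp_eq_mergeBlocks]
      refine Setoid.le_def.2 ?_
      rintro x y (rfl | ⟨hx, hy⟩)
      exacts [(P.mergeBlocks _).refl' x, Or.inr ⟨hsat hx, hsat hy⟩]
    rw [Set.union_empty, sup_eq_left.2 ((isEmbedded_iff.1 h).1.trans le_sup_left), hQ,
      ← sup_assoc, sup_eq_left.2 hbv_le, sup_modp_eq_mergeBlocks]
  have hPjoin := P.numBlocks_mergeBlocks_add (Set.insert_nonempty a {u})
  rw [Set.image_pair, Set.ncard_pair (block_eq_block_iff.not.2 hau)] at hPjoin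
  have hQblocks := numBlocks_modp_sup_modp_add (Set.insert_nonempty a {u})
    (Set.insert_nonempty b {v}) hdisj
  rw [Set.ncard_pair fun e => hau (by rw [← e]), Set.ncard_pair fun e => hbv (by rw [← e]),
    ← hQ] at hQblocks
  intro hmod
  have key := (isModularElem_iff h).1 hmod ∅ Q (embedded_empty n Q)
  rw [hjoin, hmeet, numBlocks_bot, Nat.card_fin, Set.union_empty, Set.inter_empty,
    Set.ncard_empty] at key
  have := numBlocks_le P
  have := numBlocks_le (P.mergeBlocks {a, u})
  omega

lemma not_isModularElem_singleton_modp {C : Set (Fin n)} {i c₁ c₂ : Fin n}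
    (h : IsEmbedded n ({i}, modp n C)) (hi : i ∉ C) (hc₁ : c₁ ∈ C) (hc₂ : c₂ ∈ C)
    (hne : c₁ ≠ c₂) : ¬IsModularElem n ⟨({i}, modp n C), h⟩ := by
  have hic₁ : i ≠ c₁ := fun e => hi (e ▸ hc₁)
  have hic₂ : i ∉ ({c₂} : Set (Fin n)) := fun e => hi (e ▸ hc₂)
  have hc₂' : c₂ ∉ ({i, c₁} : Set (Fin n)) := by
    rintro (rfl | rfl)
    exacts [hi hc₂, hne rfl]
  have hy : IsEmbedded n ({c₂}, modp n {i, c₁}) := by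
    simpa only [block_modp_of_notMem hc₂'] using isEmbedded_block (modp n {i, c₁}) c₂
  have hjoin : modp n C ⊔ modp n {i, c₁} ⊔ modp n ({i} ∪ {c₂}) = modp n (insert i C) := by
    have hsub : {i} ∪ {c₂} ⊆ insert i C := Set.union_subset
      (Set.singleton_subset_iff.2 (Set.mem_insert i C))
      (Set.singleton_subset_iff.2 (Set.mem_insert_of_mem i hc₂))
    rw [modp_sup_modp ⟨c₁, hc₁, Or.inr rfl⟩, Set.union_insert, Set.union_singleton,
      Set.insert_eq_of_mem hc₁, sup_eq_left.2 (modp_mono hsub)]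
  have hmeet : modp n C ⊓ modp n {i, c₁} = ⊥ := by
    rw [modp_inf_modp]
    refine modp_eq_bot_of_subsingleton ((Set.subsingleton_singleton (a := c₁)).anti ?_)
    rintro x ⟨hxC, rfl | rfl⟩
    exacts [absurd hxC hi, rfl]
  intro hmod
  have key := (isModularElem_iff h).1 hmod _ _ hy
  rw [hjoin, hmeet, numBlocks_bot, Nat.card_fin, Set.singleton_inter_eq_empty.2 hic₂,
    Set.ncard_empty, Set.ncard_singleton, Set.ncard_singleton,
    min_ncard_one_of_nonempty (Set.singleton_nonempty i |>.mono Set.subset_union_left)] at key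
  have h1 := numBlocks_modp_add ⟨c₁, hc₁⟩
  have h2 := numBlocks_modp_add (Set.insert_nonempty i C)
  rw [Set.ncard_insert_of_notMem hi] at h2
  have h3 := numBlocks_modp_add (Set.insert_nonempty i {c₁})
  rw [Set.ncard_pair hic₁] at h3
  have := numBlocks_le (modp n C)
  have := numBlocks_le (modp n {i, c₁})
  have := numBlocks_le (modp n (insert i C))
  omega

end Modular

section Characterization

variable {n : ℕ}

open Setoid

lemma exists_eq_modp_of_forall_rel {P : Setoid (Fin n)}
    (hP : ∀ a b u v, P a b → a ≠ b → P u v → u ≠ v → P a u) : ∃ C, P = modp n C := by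
  by_cases h : ∃ a b, P a b ∧ a ≠ b
  · obtain ⟨a, b, hab, hne⟩ := h
    refine ⟨P.block a, Setoid.ext fun u v => ⟨fun huv => ?_, ?_⟩⟩
    · rcases eq_or_ne u v with rfl | huv_ne
      · exact Or.inl rfl
      · have hau := hP a b u v hab hne huv huv_ne
        exact Or.inr ⟨P.symm' hau, P.trans' (P.symm' huv) (P.symm' hau)⟩
    · rintro (rfl | ⟨hu, hv⟩)
      exacts [P.refl' u, P.trans' hu (P.symm' hv)]
  · push Not at h
    refine ⟨∅, Setoid.ext fun u v => ⟨fun huv => Or.inl (h u v huv), ?_⟩⟩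
    rintro (rfl | ⟨hu, -⟩)
    exacts [P.refl' u, absurd hu (Set.notMem_empty u)]

lemma eq_bot_or_exists_modp_iff {P : Setoid (Fin n)} :
    (P = ⊥ ∨ ∃ C : Set (Fin n), 1 < C.ncard ∧ P = modp n C) ↔ ∃ C, P = modp n C := by
  constructor
  · rintro (rfl | ⟨C, -, rfl⟩)
    exacts [⟨∅, (modp_eq_bot_of_subsingleton Set.subsingleton_empty).symm⟩, ⟨C, rfl⟩]
  · rintro ⟨C, rfl⟩
    rcases le_or_gt C.ncard 1 with hC | hC
    · exact Or.inl (modp_eq_bot_of_subsingleton (Set.ncard_le_one_iff_subsingleton.1 hC))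
    · exact Or.inr ⟨C, hC, rfl⟩

theorem isModularElem_iff_exists_modp (x : Emb n) :
    IsModularElem n x ↔ (∃ C, x.val.2 = modp n C) ∧ (x.val.1 = ∅ ∨ x.val.2 = modp n x.val.1) := by
  obtain ⟨⟨A, P⟩, h⟩ := x
  refine ⟨fun hmod => ?_, ?_⟩
  · obtain ⟨C, rfl⟩ : ∃ C, P = modp n C :=
      exists_eq_modp_of_forall_rel fun a b u v hab hne huv huv_ne => by_contra fun hau =>
        not_isModularElem_of_two_blocks h hab hne huv huv_ne hau hmod
    refine ⟨⟨C, rfl⟩, ?_⟩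
    rcases A.eq_empty_or_nonempty with hA | ⟨i, hi⟩
    · exact Or.inl hA
    show A = ∅ ∨ modp n C = modp n A
    have hA : (modp n C).block i = A := (isEmbedded_iff.1 h).2 i hi
    by_cases hiC : i ∈ C
    · rw [← hA, block_modp_of_mem hiC]
      exact Or.inr rfl
    rw [block_modp_of_notMem hiC] at hA
    subst hA
    by_cases hC : C.Subsingleton
    · rw [modp_eq_bot_of_subsingleton hC, modp_eq_bot_of_subsingleton Set.subsingleton_singleton]
      exact Or.inr rfl
    obtain ⟨c₁, hc₁, c₂, hc₂, hne⟩ := Set.not_subsingleton_iff.1 hC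
    exact absurd hmod (not_isModularElem_singleton_modp h hiC hc₁ hc₂ hne)
  · rintro ⟨⟨C, hC⟩, hA | hP⟩
    · dsimp only at hA hC
      subst hA hC
      exact isModularElem_empty_modp C h
    · dsimp only at hP
      subst hP
      rcases A.eq_empty_or_nonempty with rfl | hA
      exacts [isModularElem_empty_modp ∅ h, isModularElem_modp_self hA h]

end Characterization

section Counting

lemma card_set_eq_two_pow {α : Type*} [Finite α] : Nat.card (Set α) = 2 ^ Nat.card α := by
  have := Fintype.ofFinite α
  classical
  simp [Nat.card_eq_fintype_card, Fintype.card_set]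

lemma card_subtype_add_card_subtype_not {α : Type*} [Finite α] (p : α → Prop) :
    Nat.card {a // p a} + Nat.card {a // ¬p a} = Nat.card α := by
  classical
  rw [← Nat.card_sum, Nat.card_congr (Equiv.sumCompl p)]

lemma card_nonempty_sets {α : Type*} [Finite α] :
    Nat.card {C : Set α // C.Nonempty} = 2 ^ Nat.card α - 1 := by
  have := card_subtype_add_card_subtype_not (Set.Nonempty (α := α))
  simp only [Set.not_nonempty_iff_eq_empty, Nat.card_unique, card_set_eq_two_pow] at this
  omega

lemma card_ncard_ne_one_sets {α : Type*} [Finite α] :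
    Nat.card {C : Set α // C.ncard ≠ 1} = 2 ^ Nat.card α - Nat.card α := by
  have hsingletons : Nat.card {C : Set α // ¬C.ncard ≠ 1} = Nat.card α := by
    refine (Nat.card_eq_of_bijective (fun a : α => (⟨{a}, by simp⟩ : {C : Set α // ¬C.ncard ≠ 1}))
      ⟨fun a b hab => Set.singleton_injective (congrArg Subtype.val hab), ?_⟩).symm
    rintro ⟨C, hC⟩
    obtain ⟨a, rfl⟩ := Set.ncard_eq_one.1 (not_not.1 hC)
    exact ⟨a, rfl⟩
  have := card_subtype_add_card_subtype_not (fun C : Set α => C.ncard ≠ 1)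
  rw [hsingletons, card_set_eq_two_pow] at this
  omega

variable {n : ℕ}

lemma mem_iff_exists_ne_modp_rel {C : Set (Fin n)} (hC : C.ncard ≠ 1) {c : Fin n} :
    c ∈ C ↔ ∃ d, d ≠ c ∧ modp n C c d := by
  refine ⟨fun hc => ?_, fun ⟨d, hd, hcd⟩ => (hcd.resolve_left hd.symm).1⟩
  have hpos := (Set.ncard_pos (Set.toFinite C)).2 ⟨c, hc⟩
  obtain ⟨d, hd, hdc⟩ := Set.exists_ne_of_one_lt_ncard (s := C) (by omega) c
  exact ⟨d, hdc, Or.inr ⟨hc, hd⟩⟩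

lemma modp_injOn : {C : Set (Fin n) | C.ncard ≠ 1}.InjOn (modp n) := fun C hC D hD h =>
  Set.ext fun c => by rw [mem_iff_exists_ne_modp_rel hC, mem_iff_exists_ne_modp_rel hD, h]

lemma exists_ncard_ne_one_modp_eq (C : Set (Fin n)) :
    ∃ D : Set (Fin n), D.ncard ≠ 1 ∧ modp n D = modp n C := by
  by_cases hC : C.ncard = 1
  · obtain ⟨c, rfl⟩ := Set.ncard_eq_one.1 hC
    refine ⟨∅, by simp, ?_⟩
    rw [modp_eq_bot_of_subsingleton Set.subsingleton_empty,
      modp_eq_bot_of_subsingleton Set.subsingleton_singleton]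
  · exact ⟨C, hC, rfl⟩

lemma card_modular_shape :
    Nat.card {x : Emb n // (∃ C, x.val.2 = modp n C) ∧ (x.val.1 = ∅ ∨ x.val.2 = modp n x.val.1)} =
      Nat.card {C : Set (Fin n) // C.Nonempty} + Nat.card {C : Set (Fin n) // C.ncard ≠ 1} := by
  rw [← Nat.card_sum]
  refine (Nat.card_eq_of_bijective (Sum.elim
    (fun C => ⟨⟨(C.1, modp n C.1), isEmbedded_modp_self C.2⟩, ⟨C.1, rfl⟩, Or.inr rfl⟩)
    (fun C => ⟨⟨(∅, modp n C.1), embedded_empty n _⟩, ⟨C.1, rfl⟩, Or.inl rfl⟩)) ⟨?_, ?_⟩).symm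
  · rintro (⟨C, hC⟩ | ⟨C, hC⟩) (⟨D, hD⟩ | ⟨D, hD⟩) h <;>
      simp only [Sum.elim_inl, Sum.elim_inr, Subtype.mk.injEq, Prod.mk.injEq] at h
    · obtain rfl := h.1
      rfl
    · exact absurd h.1 hC.ne_empty
    · exact absurd h.1.symm hD.ne_empty
    · obtain rfl := modp_injOn hC hD h.2
      rfl
  · rintro ⟨⟨⟨A, P⟩, h⟩, ⟨C, hC⟩, hA⟩
    dsimp only at hC hA
    subst hC
    rcases A.eq_empty_or_nonempty with rfl | hA'
    · obtain ⟨D, hD, hDC⟩ := exists_ncard_ne_one_modp_eq C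
      exact ⟨Sum.inr ⟨D, hD⟩, Subtype.ext (Subtype.ext (Prod.ext rfl hDC))⟩
    · exact ⟨Sum.inl ⟨A, hA'⟩, Subtype.ext (Subtype.ext (Prod.ext rfl
        (hA.resolve_left hA'.ne_empty).symm))⟩

end Counting

theorem modular_elements_general (n : ℕ) :
    (∀ x : Emb n, IsModularElem n x ↔
      ((x.val.2 = ⊥ ∨ ∃ C : Set (Fin n), 1 < C.ncard ∧ x.val.2 = modp n C) ∧
        (x.val.1 = ∅ ∨ x.val.2 = modp n x.val.1))) ∧
    Nat.card {x : Emb n // IsModularElem n x} = 2 ^ (n + 1) - (n + 1) := by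
  refine ⟨fun x => by rw [isModularElem_iff_exists_modp, eq_bot_or_exists_modp_iff], ?_⟩
  rw [Nat.card_congr (Equiv.subtypeEquivRight isModularElem_iff_exists_modp), card_modular_shape,
    card_nonempty_sets, card_ncard_ne_one_sets, Nat.card_fin, pow_succ]
  have := Nat.lt_two_pow_self (n := n)
  omega

theorem modular_elements (n : ℕ) (hn : 1 ≤ n) :
    (∀ x : Emb n, IsModularElem n x ↔
      ((x.val.2 = ⊥ ∨ ∃ C : Set (Fin n), 1 < C.ncard ∧ x.val.2 = modp n C) ∧
        (x.val.1 = ∅ ∨ x.val.2 = modp n x.val.1))) ∧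
    Nat.card {x : Emb n // IsModularElem n x} = 2 ^ (n + 1) - (n + 1) :=
  modular_elements_general n
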